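/- For every k ≥ 1, the number of natural numbers whose base-3/2 representation has exactly k+1 digits is three times the number of even natural numbers whose base-3/2 representation has exactly k digits; formally, the set {m : (digits m).length = k+1} has cardinality equal to 3 times the cardinality of {m : Even m ∧ (digits m).length = k}. -/
import Mathlib


def digits : ℕ → List ℕ
  | 0 => []
  | n + 1 => digits (2 * ((n + 1) / 3)) ++ [(n + 1) % 3]
decreasing_by omega

def val (L : List ℕ) : ℚ := L.foldl (fun acc d => 3/2 * acc + d) 0

lemma digits_pos : ∀ n : ℕ, 0 < n → digits n = digits (2 * (n / 3)) ++ [n % 3]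
  | n + 1, _ => by rw [digits]

lemma digits_lt (m : ℕ) : m < 3 ^ (digits m).length := by
  induction m using Nat.strong_induction_on with
  | _ m ih =>
    match m with
    | 0 => simp [digits]
    | n + 1 =>
      rw [digits]
      simp only [List.length_append, List.length_singleton]
      have h := ih (2 * ((n + 1) / 3)) (by omega)
      rw [pow_succ]
      omega

lemma digits_append (m d : ℕ) (hd : d < 3) (hm : Even m) (hpos : 0 < 3 * (m / 2) + d) :
    digits (3 * (m / 2) + d) = digits m ++ [d] := by
  rw [digits_pos _ hpos]
  obtain ⟨t, rfl⟩ := hm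
  have h1 : (3 * ((t + t) / 2) + d) / 3 = t := by omega
  have h2 : (3 * ((t + t) / 2) + d) % 3 = d := by omega
  rw [h1, h2]
  congr 2
  omega

theorem card_length_succ (k : ℕ) (hk : 1 ≤ k) :
    {m : ℕ | (digits m).length = k + 1}.ncard =
      3 * {m : ℕ | Even m ∧ (digits m).length = k}.ncard := by
  set A := {m : ℕ | Even m ∧ (digits m).length = k} with hA
  have hApos : ∀ m ∈ A, 0 < m := by
    intro m hm
    rcases Nat.eq_zero_or_pos m with rfl | h
    · exfalso
      have := hm.2
      simp [digits] at this
      omega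
    · exact h
  have hfin : A.Finite := Set.Finite.subset (Set.finite_Iio (3 ^ k)) (by
    intro m hm
    have h := digits_lt m
    rw [hm.2] at h
    exact h)
  have hmemA : ∀ m ∈ A, ∀ d < 3, digits (3 * (m / 2) + d) = digits m ++ [d] := by
    intro m hm d hd
    have hm0 := hApos m hm
    have hm2 : 2 ≤ m := by
      obtain ⟨t, rfl⟩ := hm.1
      omega
    exact digits_append m d hd hm.1 (by omega)
  have hS : {m : ℕ | (digits m).length = k + 1} =
      (fun m => 3 * (m / 2) + 0) '' A ∪ (fun m => 3 * (m / 2) + 1) '' A ∪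
        (fun m => 3 * (m / 2) + 2) '' A := by
    ext n
    simp only [Set.mem_setOf_eq, Set.mem_union, Set.mem_image]
    constructor
    · intro hn
      have hn0 : 0 < n := by
        rcases Nat.eq_zero_or_pos n with rfl | h
        · simp [digits] at hn
        · exact h
      have heq := digits_pos n hn0
      have hlen : (digits n).length = (digits (2 * (n / 3))).length + 1 := by
        rw [heq]; simp
      have hmem : 2 * (n / 3) ∈ A := ⟨⟨n / 3, by ring⟩, by omega⟩
      have hcase : n % 3 = 0 ∨ n % 3 = 1 ∨ n % 3 = 2 := by omega
      rcases hcase with h | h | h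
      · exact Or.inl (Or.inl ⟨2 * (n / 3), hmem, by omega⟩)
      · exact Or.inl (Or.inr ⟨2 * (n / 3), hmem, by omega⟩)
      · exact Or.inr ⟨2 * (n / 3), hmem, by omega⟩
    · rintro ((⟨m, hm, rfl⟩ | ⟨m, hm, rfl⟩) | ⟨m, hm, rfl⟩) <;>
        rw [hmemA m hm _ (by omega)] <;>
        simp [hm.2]
  rw [hS]
  have hinj : ∀ d : ℕ, Set.InjOn (fun m => 3 * (m / 2) + d) A := by
    intro d x hx y hy hxy
    obtain ⟨a, ha⟩ := hx.1
    obtain ⟨b, hb⟩ := hy.1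
    beta_reduce at hxy
    omega
  have hfin0 := hfin.image (fun m => 3 * (m / 2) + 0)
  have hfin1 := hfin.image (fun m => 3 * (m / 2) + 1)
  have hfin2 := hfin.image (fun m => 3 * (m / 2) + 2)
  have hmod : ∀ d : ℕ, d < 3 → ∀ n ∈ (fun m => 3 * (m / 2) + d) '' A, n % 3 = d := by
    rintro d hd n ⟨m, hm, rfl⟩
    beta_reduce
    omega
  have hd01 : Disjoint ((fun m => 3 * (m / 2) + 0) '' A) ((fun m => 3 * (m / 2) + 1) '' A) := by
    rw [Set.disjoint_left]
    intro n h0 h1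
    have := hmod 0 (by omega) n h0
    have := hmod 1 (by omega) n h1
    omega
  have hd012 : Disjoint ((fun m => 3 * (m / 2) + 0) '' A ∪ (fun m => 3 * (m / 2) + 1) '' A)
      ((fun m => 3 * (m / 2) + 2) '' A) := by
    rw [Set.disjoint_left]
    rintro n (h0 | h1) h2
    · have := hmod 0 (by omega) n h0
      have := hmod 2 (by omega) n h2
      omega
    · have := hmod 1 (by omega) n h1
      have := hmod 2 (by omega) n h2
      omega
  rw [Set.ncard_union_eq hd012 (hfin0.union hfin1) hfin2,
    Set.ncard_union_eq hd01 hfin0 hfin1,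
    Set.ncard_image_of_injOn (hinj 0), Set.ncard_image_of_injOn (hinj 1),
    Set.ncard_image_of_injOn (hinj 2)]
  ring
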